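/- For every integer L with 1 < L ≤ d and every choice of L rows of F_d ⊗ F_d (i.e., L row indices in ℤ_d×ℤ_d), there exist L columns of F_d ⊗ F_d (L column indices in ℤ_d×ℤ_d) such that the resulting L×L submatrix is not invertible. -/
import Mathlib


open Matrix

/-- Unnormalized 2D discrete Fourier transform of `a : ℤ_d × ℤ_d → ℂ`. -/
noncomputable def hatKer2 (d : ℕ) [NeZero d] (a : ZMod d × ZMod d → ℂ) :
    ZMod d × ZMod d → ℂ :=
  fun j => ∑ k : ZMod d × ZMod d,
    a k * Complex.exp (-(2 * (Real.pi : ℂ) * Complex.I) *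
      ((j.1.val : ℂ) * (k.1.val : ℂ) + (j.2.val : ℂ) * (k.2.val : ℂ)) / (d : ℂ))

/-- The 2D circular convolution operator with kernel `a`, as a matrix. -/
def convMat2 (d : ℕ) (a : ZMod d × ZMod d → ℂ) :
    Matrix (ZMod d × ZMod d) (ZMod d × ZMod d) ℂ :=
  Matrix.of fun k i => a (k - i)

/-- The Kronecker product `F_d ⊗ F_d`: its entry at `((i₁,i₂),(j₁,j₂))` is
`(1/d) ω_d^{i₁j₁ + i₂j₂}`. -/
noncomputable def F2Mat (d : ℕ) : Matrix (ZMod d × ZMod d) (ZMod d × ZMod d) ℂ :=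
  Matrix.of fun i j => ((d : ℂ))⁻¹ * Complex.exp (-(2 * (Real.pi : ℂ) * Complex.I) *
    ((i.1.val : ℂ) * (j.1.val : ℂ) + (i.2.val : ℂ) * (j.2.val : ℂ)) / (d : ℂ))

-- auxiliary: existence of a "primitive" direction orthogonal to δ
lemma exists_w (d : ℕ) [NeZero d] (δ : ZMod d × ZMod d) (hδ : δ ≠ 0) :
    ∃ u v x y : ZMod d, δ.1 * u + δ.2 * v = 0 ∧ x * u + y * v = 1 := by
  set a := δ.1.val with ha
  set b := δ.2.val with hb
  have hab : a ≠ 0 ∨ b ≠ 0 := by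
    by_contra h
    push_neg at h
    apply hδ
    have h1 : δ.1 = 0 := by
      have := h.1
      rwa [ha, ZMod.val_eq_zero] at this
    have h2 : δ.2 = 0 := by
      have := h.2
      rwa [hb, ZMod.val_eq_zero] at this
    exact Prod.ext h1 h2
  set g := Nat.gcd a b with hg
  have hgpos : 0 < g := by
    rcases hab with h | h
    · exact Nat.gcd_pos_of_pos_left _ (Nat.pos_of_ne_zero h)
    · exact Nat.gcd_pos_of_pos_right _ (Nat.pos_of_ne_zero h)
  have hδ1 : δ.1 = ((a : ℕ) : ZMod d) := by
    rw [ha, ZMod.natCast_val, ZMod.cast_id]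
  have hδ2 : δ.2 = ((b : ℕ) : ZMod d) := by
    rw [hb, ZMod.natCast_val, ZMod.cast_id]
  obtain ⟨a', ha'⟩ : g ∣ a := Nat.gcd_dvd_left a b
  obtain ⟨b', hb'⟩ : g ∣ b := Nat.gcd_dvd_right a b
  have hco : Nat.Coprime a' b' := by
    have h1 : a' = a / g := by rw [ha', Nat.mul_div_cancel_left _ hgpos]
    have h2 : b' = b / g := by rw [hb', Nat.mul_div_cancel_left _ hgpos]
    rw [h1, h2]
    exact Nat.coprime_div_gcd_div_gcd hgpos
  have hbez : IsCoprime ((a' : ℕ) : ℤ) ((b' : ℕ) : ℤ) :=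
    Nat.isCoprime_iff_coprime.mpr hco
  obtain ⟨X, Y, hXY⟩ := hbez
  refine ⟨((b' : ℕ) : ZMod d), -((a' : ℕ) : ZMod d),
    ((Y : ℤ) : ZMod d), -((X : ℤ) : ZMod d), ?_, ?_⟩
  · rw [hδ1, hδ2]
    have key : a * b' = b * a' := by
      rw [ha', hb']
      ring
    have : ((a * b' : ℕ) : ZMod d) = ((b * a' : ℕ) : ZMod d) := by rw [key]
    push_cast at this
    linear_combination this
  · have : ((X * (a' : ℕ) + Y * (b' : ℕ) : ℤ) : ZMod d) = ((1 : ℤ) : ZMod d) := by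
      rw [hXY]
    push_cast at this
    linear_combination this

lemma F2Mat_apply (d : ℕ) [NeZero d] (i j : ZMod d × ZMod d) :
    F2Mat d i j = (d : ℂ)⁻¹ *
      Complex.exp (-(2 * (Real.pi : ℂ) * Complex.I) / d) ^
        (i.1 * j.1 + i.2 * j.2 : ZMod d).val := by
  have hd : (d : ℂ) ≠ 0 := Nat.cast_ne_zero.mpr (NeZero.ne d)
  set ζ := Complex.exp (-(2 * (Real.pi : ℂ) * Complex.I) / d) with hζ
  have hζd : ζ ^ d = 1 := by
    rw [hζ, ← Complex.exp_nat_mul]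
    have : (d : ℂ) * (-(2 * (Real.pi : ℂ) * Complex.I) / d) = -(2 * Real.pi * Complex.I) := by
      field_simp
    rw [this, Complex.exp_neg, Complex.exp_two_pi_mul_I, inv_one]
  set N := i.1.val * j.1.val + i.2.val * j.2.val with hN
  have step1 : F2Mat d i j = (d : ℂ)⁻¹ * ζ ^ N := by
    rw [hζ, ← Complex.exp_nat_mul]
    unfold F2Mat
    simp only [Matrix.of_apply]
    congr 1
    push_cast [hN]
    ring
  have step2 : ζ ^ N = ζ ^ (N % d) := by
    conv_lhs => rw [← Nat.mod_add_div N d]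
    rw [pow_add, pow_mul, hζd, one_pow, mul_one]
  have step3 : N % d = (i.1 * j.1 + i.2 * j.2 : ZMod d).val := by
    have : ((N : ℕ) : ZMod d) = i.1 * j.1 + i.2 * j.2 := by
      push_cast [hN, ZMod.natCast_val, ZMod.cast_id]
      ring
    rw [← this, ZMod.val_natCast]
  rw [step1, step2, step3]


/-- for every `1 < L ≤ d` and every choice of `L` distinct rows of
`F_d ⊗ F_d`, there exist `L` distinct columns so that the resulting `L × L` submatrix
is not invertible. -/
theorem stmt14 (d : ℕ) [NeZero d] (L : ℕ) (hL1 : 1 < L) (hLd : L ≤ d)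
    (ρ : Fin L → ZMod d × ZMod d) (hρ : Function.Injective ρ) :
    ∃ κ : Fin L → ZMod d × ZMod d, Function.Injective κ ∧
      ¬ IsUnit (Matrix.of fun s t : Fin L => F2Mat d (ρ s) (κ t)) := by
  have h0L : 0 < L := Nat.lt_of_lt_of_le Nat.one_pos (le_of_lt hL1)
  set s₀ : Fin L := ⟨0, h0L⟩ with hs₀
  set s₁ : Fin L := ⟨1, hL1⟩ with hs₁
  have hs01 : s₀ ≠ s₁ := by
    simp [hs₀, hs₁, Fin.ext_iff]
  have hδ : ρ s₀ - ρ s₁ ≠ 0 := by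
    intro h
    exact hs01 (hρ (by linear_combination h))
  obtain ⟨u, v, x, y, hortho, hunit⟩ := exists_w d (ρ s₀ - ρ s₁) hδ
  set κ : Fin L → ZMod d × ZMod d := fun t => ((t : ℕ) * u, (t : ℕ) * v) with hκ
  have hκinj : Function.Injective κ := by
    intro t t' h
    rw [hκ] at h
    simp only [Prod.mk.injEq] at h
    have hm : (((t : ℕ) : ZMod d) - ((t' : ℕ) : ZMod d)) = 0 := by
      have := congrArg (fun z => x * z) (sub_eq_zero.mpr h.1)
      have h2 := congrArg (fun z => y * z) (sub_eq_zero.mpr h.2)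
      calc ((t : ℕ) : ZMod d) - ((t' : ℕ) : ZMod d)
          = (((t : ℕ) : ZMod d) - ((t' : ℕ) : ZMod d)) * (x * u + y * v) := by
            rw [hunit, mul_one]
        _ = 0 := by linear_combination this + h2
    have : ((t : ℕ) : ZMod d) = ((t' : ℕ) : ZMod d) := sub_eq_zero.mp hm
    have hval := congrArg ZMod.val this
    rw [ZMod.val_natCast, ZMod.val_natCast] at hval
    rw [Nat.mod_eq_of_lt (lt_of_lt_of_le t.isLt hLd),
      Nat.mod_eq_of_lt (lt_of_lt_of_le t'.isLt hLd)] at hval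
    exact Fin.ext hval
  refine ⟨κ, hκinj, ?_⟩
  intro hU
  rw [Matrix.isUnit_iff_isUnit_det] at hU
  have hdet : (Matrix.of fun s t : Fin L => F2Mat d (ρ s) (κ t)).det = 0 := by
    apply Matrix.det_zero_of_row_eq hs01
    funext t
    simp only [Matrix.of_apply]
    rw [F2Mat_apply, F2Mat_apply]
    have hrel : (ρ s₀).1 * u + (ρ s₀).2 * v = (ρ s₁).1 * u + (ρ s₁).2 * v := by
      have : (ρ s₀ - ρ s₁).1 = (ρ s₀).1 - (ρ s₁).1 := rfl
      have h2 : (ρ s₀ - ρ s₁).2 = (ρ s₀).2 - (ρ s₁).2 := rfl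
      rw [this, h2] at hortho
      linear_combination hortho
    have hz : (ρ s₀).1 * (κ t).1 + (ρ s₀).2 * (κ t).2
        = (ρ s₁).1 * (κ t).1 + (ρ s₁).2 * (κ t).2 := by
      rw [hκ]
      simp only
      linear_combination ((t : ℕ) : ZMod d) * hrel
    rw [hz]
  rw [hdet] at hU
  simp at hU
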